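/- arXiv:2302.02059 — 3 statements merged into one kernel-verified Lean document; each statement's English description precedes it below -/
import Mathlib

section
/- Let t = (t_0, t_1, …, t_m) ∈ T^{m+1} with 0 = t_0 < t_1 < … < t_m. Then t is an admissible translation vector if and only if the adjacency matrix A_t of the directed graph G_t is nilpotent, i.e. A_t^ℓ = 0 for some ℓ ∈ ℤ_+. -/
noncomputable section

namespace HSCantor

/-- A `D`-coding of `x`: a digit sequence `c` with digits in `D ⊆ ℤ` such that
`x = (1-β)/N · Σ_{k=1}^∞ c_k β^{k-1}` (here indexed from `k = 0`). -/
def IsCoding (N : ℕ) (β : ℝ) (D : Set ℤ) (x : ℝ) (c : ℕ → ℤ) : Prop :=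
  (∀ k, c k ∈ D) ∧ x = (1 - β) / N * ∑' k : ℕ, (c k : ℝ) * β ^ k

/-- The set `Γ_{β,D}` for a digit set `D ⊆ ℤ`. -/
def cantorD (N : ℕ) (β : ℝ) (D : Set ℤ) : Set ℝ := { x | ∃ c, IsCoding N β D x c }

/-- The homogeneous symmetric Cantor set `Γ = Γ_{β,{0,1,…,N}}`. -/
def Gamma (N : ℕ) (β : ℝ) : Set ℝ := cantorD N β (Set.Icc 0 (N : ℤ))

/-- `E ⊆ ℝ` is a self-similar set: it is nonempty, compact, and is the union of its
images under finitely many contracting similitudes `x ↦ r x + b`, `0 < |r| < 1`. -/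
def IsSelfSimilar (E : Set ℝ) : Prop :=
  E.Nonempty ∧ IsCompact E ∧ ∃ F : Finset (ℝ × ℝ),
    (∀ p ∈ F, 0 < |p.1| ∧ |p.1| < 1) ∧
    E = ⋃ p ∈ F, (fun x => p.1 * x + p.2) '' E

/-- `Γ_t = ⋃_{j=0}^m (Γ + t_j)`. -/
def GammaT (N : ℕ) (β : ℝ) {m : ℕ} (t : Fin (m + 1) → ℝ) : Set ℝ :=
  ⋃ j, (fun x => x + t j) '' Gamma N β

/-- The set `T = ⋃_{n≥1} { (1-β)/N · Σ_{k=1}^n j_k β^{-k} : j_k ∈ {0,…,N} }`. -/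
def Tset (N : ℕ) (β : ℝ) : Set ℝ :=
  { x | ∃ n : ℕ, 1 ≤ n ∧ ∃ c : ℕ → ℕ, (∀ k, c k ≤ N) ∧
      x = (1 - β) / N * ∑ k ∈ Finset.Icc 1 n, (c k : ℝ) * β ^ (-(k : ℤ)) }

/-- `d` is a digit representation of the translation vector `t` with `τ` digits:
`t_j = (1-β)/N · Σ_{k=1}^τ d_{j,k} β^{-k}` with all digits in `{0,…,N}`. -/
def IsDigitRep (N : ℕ) (β : ℝ) {m : ℕ} (t : Fin (m + 1) → ℝ) (τ : ℕ)
    (d : Fin (m + 1) → ℕ → ℕ) : Prop :=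
  (∀ j k, d j k ≤ N) ∧
    ∀ j, t j = (1 - β) / N * ∑ k ∈ Finset.Icc 1 τ, (d j k : ℝ) * β ^ (-(k : ℤ))

/-- `d` is a digit representation of `t` with `τ = τ_t` digits, `τ_t` minimal. -/
def IsMinimalRep (N : ℕ) (β : ℝ) {m : ℕ} (t : Fin (m + 1) → ℝ) (τ : ℕ)
    (d : Fin (m + 1) → ℕ → ℕ) : Prop :=
  IsDigitRep N β t τ d ∧ ∀ τ' < τ, ∀ d', ¬ IsDigitRep N β t τ' d'

/-- `s_k = max_{0 ≤ j ≤ m} t_{j,k}`. -/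
def digitSup {m : ℕ} (d : Fin (m + 1) → ℕ → ℕ) (k : ℕ) : ℕ :=
  Finset.univ.sup fun j => d j k

/-- Words of length `n` over the alphabet `{0,1,…,N}`, as lists of naturals. -/
def Words (N n : ℕ) : Set (List ℕ) := { w | w.length = n ∧ ∀ x ∈ w, x ≤ N }

/-- `Ω_t^n`: words `i_1 … i_n ∈ {0,…,N}^n` with `i_{n+1-k} ≤ N - s_k` for `1 ≤ k ≤ τ`.
(A list `w = [i_1, …, i_n]` satisfies `i_{n+1-k} = w.getD (n-k) 0`.) -/
def Omega (N τ : ℕ) (s : ℕ → ℕ) (n : ℕ) : Set (List ℕ) :=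
  { w | w ∈ Words N n ∧ ∀ k, 1 ≤ k → k ≤ τ → w.getD (n - k) 0 + s k ≤ N }

/-- `Ω̂_t^n`: words `i_1 … i_n ∈ {0,…,N}^n` with `i_{n+1-k} ≥ s_k` for `1 ≤ k ≤ τ`. -/
def OmegaHat (N τ : ℕ) (s : ℕ → ℕ) (n : ℕ) : Set (List ℕ) :=
  { w | w ∈ Words N n ∧ ∀ k, 1 ≤ k → k ≤ τ → s k ≤ w.getD (n - k) 0 }

/-- `W_t^τ = A_t^τ ∪ Â_t^τ`: words obtained from a word in `Ω_t^τ` (resp. `Ω̂_t^τ`)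
by adding (resp. subtracting) the digits of some `t_j` to the last `τ` positions. -/
def Wset (N : ℕ) {m : ℕ} (τ : ℕ) (d : Fin (m + 1) → ℕ → ℕ) : Set (List ℕ) :=
  { v | ∃ w ∈ Omega N τ (digitSup d) τ, ∃ j : Fin (m + 1),
      v = List.ofFn fun idx : Fin τ => w.getD idx 0 + d j (τ - (idx : ℕ)) } ∪
  { v | ∃ w ∈ OmegaHat N τ (digitSup d) τ, ∃ j : Fin (m + 1),
      v = List.ofFn fun idx : Fin τ => w.getD idx 0 - d j (τ - (idx : ℕ)) }

/-- The symbolic admissibility condition: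
`⋃_{n=τ}^ℓ {0,…,N}^{n-τ} × W_t^τ × {0,…,N}^{ℓ-n} = {0,…,N}^ℓ` for some `ℓ ≥ τ`. -/
def AdmissibleWith (N : ℕ) {m : ℕ} (τ : ℕ) (d : Fin (m + 1) → ℕ → ℕ) : Prop :=
  ∃ ℓ, τ ≤ ℓ ∧
    (⋃ n ∈ Finset.Icc τ ℓ,
      { z : List ℕ | ∃ u ∈ Words N (n - τ), ∃ w ∈ Wset N τ d, ∃ v ∈ Words N (ℓ - n),
          z = u ++ w ++ v }) = Words N ℓ

/-- `t` is an admissible translation vector. -/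
def IsAdmissible (N : ℕ) (β : ℝ) {m : ℕ} (t : Fin (m + 1) → ℝ) : Prop :=
  (∀ j, t j ∈ Tset N β) ∧
    ∃ τ d, IsMinimalRep N β t τ d ∧ AdmissibleWith N τ d

/-- The vertex set `V_t = {0,…,N}^τ \ W_t^τ` of the directed graph `G_t`. -/
def Vset (N : ℕ) {m : ℕ} (τ : ℕ) (d : Fin (m + 1) → ℕ → ℕ) : Set (List ℕ) :=
  Words N τ \ Wset N τ d

/-- The graph on `V` with an edge `i → j` iff `i_2 … i_τ = j_1 … j_{τ-1}` has a cycle: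
a directed path of positive length starting and ending at the same vertex. -/
def HasCycle (V : Set (List ℕ)) : Prop :=
  ∃ (L : ℕ) (p : ℕ → List ℕ), 0 < L ∧ (∀ i ≤ L, p i ∈ V) ∧
    (∀ i < L, (p i).drop 1 = (p (i + 1)).dropLast) ∧ p 0 = p L

open Classical in
/-- The adjacency matrix of the directed graph `G_t`, indexed by all words of length `τ`
over `{0,…,N}`; its `(i,j)` entry is `1` exactly when `i, j ∈ V_t` and there is a
directed edge `i → j`, and the rows and columns outside `V_t` are zero. -/
def adjMat (N τ : ℕ) (V : Set (List ℕ)) :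
    Matrix (Fin τ → Fin (N + 1)) (Fin τ → Fin (N + 1)) ℕ :=
  fun i j =>
    if (List.ofFn fun k => (i k : ℕ)) ∈ V ∧ (List.ofFn fun k => (j k : ℕ)) ∈ V ∧
        (List.ofFn fun k => (i k : ℕ)).drop 1 = (List.ofFn fun k => (j k : ℕ)).dropLast
    then 1 else 0

/-- `φ_i(x) = βx + i(1-β)/N`. -/
def phi (N : ℕ) (β : ℝ) (i : ℕ) (x : ℝ) : ℝ := β * x + i * (1 - β) / N

/-- `φ_{i_1 … i_n} = φ_{i_1} ∘ ⋯ ∘ φ_{i_n}`. -/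
def phiWord (N : ℕ) (β : ℝ) (w : List ℕ) (x : ℝ) : ℝ := w.foldr (phi N β) x

/-- The conjugate translation vector `t̂_j = t_m - t_{m-j}`. -/
def conj {m : ℕ} (t : Fin (m + 1) → ℝ) : Fin (m + 1) → ℝ :=
  fun j => t (Fin.last m) - t ⟨m - (j : ℕ), Nat.lt_succ_of_le (Nat.sub_le m j)⟩

/-! ### Auxiliary machinery for `stmt2` -/

/-- The word associated to an index of the adjacency matrix. -/
def wd (N τ : ℕ) (i : Fin τ → Fin (N + 1)) : List ℕ := List.ofFn fun k => (i k : ℕ)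

lemma wd_length (N τ : ℕ) (i : Fin τ → Fin (N + 1)) : (wd N τ i).length = τ := by
  simp [wd]

lemma wd_mem_words (N τ : ℕ) (i : Fin τ → Fin (N + 1)) : wd N τ i ∈ Words N τ := by
  refine ⟨wd_length N τ i, ?_⟩
  intro x hx
  rw [wd, List.mem_ofFn] at hx
  obtain ⟨k, rfl⟩ := hx
  exact Nat.lt_succ_iff.mp (i k).isLt

lemma exists_wd (N τ : ℕ) (w : List ℕ) (hw : w ∈ Words N τ) :
    ∃ i : Fin τ → Fin (N + 1), wd N τ i = w := by
  obtain ⟨hlen, hbd⟩ := hw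
  refine ⟨fun k => ⟨w[k]'(by omega), ?_⟩, ?_⟩
  · exact Nat.lt_succ_iff.mpr (hbd _ (List.getElem_mem _))
  · apply List.ext_getElem (by simp [wd, hlen])
    intro a h1 h2
    simp [wd]

lemma adjMat_ne_zero_iff (N τ : ℕ) (V : Set (List ℕ)) (i j : Fin τ → Fin (N + 1)) :
    adjMat N τ V i j ≠ 0 ↔
      wd N τ i ∈ V ∧ wd N τ j ∈ V ∧ (wd N τ i).drop 1 = (wd N τ j).dropLast := by
  unfold adjMat wd
  split_ifs with h
  · exact iff_of_true (by simp) h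
  · exact iff_of_false (by simp) h

lemma pow_ne_zero_iff_walk {n : Type*} [Fintype n] [DecidableEq n] (A : Matrix n n ℕ) :
    ∀ (ℓ : ℕ) (i j : n), (A ^ ℓ) i j ≠ 0 ↔
      ∃ p : ℕ → n, p 0 = i ∧ p ℓ = j ∧ ∀ k < ℓ, A (p k) (p (k + 1)) ≠ 0 := by
  intro ℓ
  induction ℓ with
  | zero =>
    intro i j
    simp only [pow_zero, Matrix.one_apply]
    constructor
    · intro h
      have hij : i = j := by by_contra hc; simp [hc] at h
      exact ⟨fun _ => i, rfl, hij ▸ rfl, by omega⟩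
    · rintro ⟨p, h0, h1, -⟩
      have : i = j := by rw [← h0, ← h1]
      simp [this]
  | succ ℓ ih =>
    intro i j
    rw [pow_succ, Matrix.mul_apply]
    constructor
    · intro h
      have hex : ∃ k, (A ^ ℓ) i k * A k j ≠ 0 := by
        by_contra hc
        push_neg at hc
        exact h (Finset.sum_eq_zero fun k _ => hc k)
      obtain ⟨k, hk⟩ := hex
      rw [Nat.mul_ne_zero_iff] at hk
      obtain ⟨p, hp0, hpl, hpe⟩ := (ih i k).mp hk.1
      refine ⟨fun q => if q = ℓ + 1 then j else p q, by simp [hp0], by simp, ?_⟩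
      intro q hq
      rcases Nat.lt_or_ge q ℓ with h1 | h1
      · simpa only [if_neg (show ¬ q = ℓ + 1 by omega),
          if_neg (show ¬ q + 1 = ℓ + 1 by omega)] using hpe q h1
      · have hqℓ : q = ℓ := by omega
        subst hqℓ
        simpa only [if_neg (show ¬ q = q + 1 by omega), if_pos rfl, ↓reduceIte, hpl] using hk.2
    · rintro ⟨p, hp0, hpl, hpe⟩
      intro hc
      rw [Finset.sum_eq_zero_iff] at hc
      have h1 : (A ^ ℓ) i (p ℓ) ≠ 0 :=
        (ih i (p ℓ)).mpr ⟨p, hp0, rfl, fun k hk => hpe k (by omega)⟩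
      have h2 : A (p ℓ) j ≠ 0 := by
        have := hpe ℓ (by omega)
        rwa [hpl] at this
      exact Nat.mul_ne_zero h1 h2 (hc (p ℓ) (Finset.mem_univ _))

lemma pow_eq_zero_of_le {n : Type*} [Fintype n] [DecidableEq n] {A : Matrix n n ℕ}
    {ℓ L : ℕ} (h : ℓ ≤ L) (hA : A ^ ℓ = 0) : A ^ L = 0 := by
  rw [show L = ℓ + (L - ℓ) by omega, pow_add, hA, Matrix.zero_mul]

/-- The window of length `τ` of `z` starting at position `k`. -/
def win (z : List ℕ) (k τ : ℕ) : List ℕ := (z.drop k).take τ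

lemma win_length (z : List ℕ) (k τ : ℕ) (h : k + τ ≤ z.length) :
    (win z k τ).length = τ := by
  simp [win]; omega

lemma win_getElem (z : List ℕ) (k τ a : ℕ) (h : a < (win z k τ).length) :
    (win z k τ)[a] = z[k + a]'(by simp [win] at h; omega) := by
  simp [win]

lemma win_decomp (z : List ℕ) (k τ : ℕ) :
    z = z.take k ++ win z k τ ++ z.drop (k + τ) := by
  rw [List.append_assoc, win]
  rw [show z.drop (k + τ) = (z.drop k).drop τ by rw [List.drop_drop, Nat.add_comm]]
  rw [List.take_append_drop, List.take_append_drop]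

lemma win_drop_one (z : List ℕ) (k τ : ℕ) (h : k + 1 + τ ≤ z.length) :
    (win z k τ).drop 1 = (win z (k + 1) τ).dropLast := by
  apply List.ext_getElem
  · rw [List.length_drop, List.length_dropLast, win_length z k τ (by omega),
      win_length z (k + 1) τ (by omega)]
  · intro a h1 h2
    rw [List.getElem_drop, List.getElem_dropLast]
    rw [List.length_drop, win_length z k τ (by omega)] at h1
    rw [win_getElem z k τ (1 + a) (by rw [win_length z k τ (by omega)]; omega),
      win_getElem z (k + 1) τ a (by rw [win_length z (k + 1) τ (by omega)]; omega)]
    congr 1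
    omega

lemma win_mem_words (N : ℕ) (z : List ℕ) (k τ L : ℕ) (hz : z ∈ Words N (τ + L))
    (hk : k ≤ L) : win z k τ ∈ Words N τ := by
  refine ⟨win_length z k τ (by rw [hz.1]; omega), ?_⟩
  intro x hx
  exact hz.2 x (List.mem_of_mem_drop (List.mem_of_mem_take hx))

lemma win_take (z : List ℕ) (q τ ℓ₀ : ℕ) (h : q + τ ≤ ℓ₀) :
    win (z.take ℓ₀) q τ = win z q τ := by
  rw [win, win, List.drop_take, List.take_take, min_eq_left (by omega)]

lemma length_of_mem_Wset {N m τ : ℕ} {d : Fin (m + 1) → ℕ → ℕ} {v : List ℕ}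
    (hv : v ∈ Wset N τ d) : v.length = τ := by
  rcases hv with ⟨w, -, j, rfl⟩ | ⟨w, -, j, rfl⟩ <;> simp

lemma Wset_subset_words {N m τ : ℕ} {d : Fin (m + 1) → ℕ → ℕ} :
    Wset N τ d ⊆ Words N τ := by
  rintro v (⟨w, hw, j, rfl⟩ | ⟨w, hw, j, rfl⟩)
  · refine ⟨by simp, ?_⟩
    intro x hx
    rw [List.mem_ofFn] at hx
    obtain ⟨idx, rfl⟩ := hx
    have hidx := idx.isLt
    have hcond := hw.2 (τ - (idx : ℕ)) (by omega) (by omega)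
    rw [show τ - (τ - (idx : ℕ)) = (idx : ℕ) by omega] at hcond
    have hds : d j (τ - (idx : ℕ)) ≤ digitSup d (τ - (idx : ℕ)) :=
      Finset.le_sup (f := fun j' => d j' (τ - (idx : ℕ))) (Finset.mem_univ j)
    show w.getD (idx : ℕ) 0 + d j (τ - (idx : ℕ)) ≤ N
    omega
  · refine ⟨by simp, ?_⟩
    intro x hx
    rw [List.mem_ofFn] at hx
    obtain ⟨idx, rfl⟩ := hx
    have hidx := idx.isLt
    have hlen := hw.1.1
    have hbd : w.getD (idx : ℕ) 0 ≤ N := by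
      rw [List.getD_eq_getElem w 0 (by omega)]
      exact hw.1.2 _ (List.getElem_mem _)
    show w.getD (idx : ℕ) 0 - d j (τ - (idx : ℕ)) ≤ N
    omega

lemma nil_mem_Wset {N m : ℕ} (d : Fin (m + 1) → ℕ → ℕ) : ([] : List ℕ) ∈ Wset N 0 d :=
  Or.inl ⟨[], ⟨⟨rfl, by simp⟩, fun k h1 h0 => by omega⟩, 0, by simp⟩

lemma digitSup_congr {m τ : ℕ} {d d' : Fin (m + 1) → ℕ → ℕ}
    (h : ∀ j k, 1 ≤ k → k ≤ τ → d j k = d' j k) {k : ℕ} (h1 : 1 ≤ k) (h2 : k ≤ τ) :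
    digitSup d k = digitSup d' k :=
  Finset.sup_congr rfl fun j _ => h j k h1 h2

lemma Wset_subset_congr {N m τ : ℕ} {d d' : Fin (m + 1) → ℕ → ℕ}
    (h : ∀ j k, 1 ≤ k → k ≤ τ → d j k = d' j k) : Wset N τ d ⊆ Wset N τ d' := by
  rintro v (⟨w, hw, j, rfl⟩ | ⟨w, hw, j, rfl⟩)
  · refine Or.inl ⟨w, ⟨hw.1, fun k h1 h2 => ?_⟩, j, ?_⟩
    · rw [← digitSup_congr h h1 h2]; exact hw.2 k h1 h2
    · congr 1
      funext idx
      rw [h j (τ - (idx : ℕ)) (by omega) (by omega)]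
  · refine Or.inr ⟨w, ⟨hw.1, fun k h1 h2 => ?_⟩, j, ?_⟩
    · rw [← digitSup_congr h h1 h2]; exact hw.2 k h1 h2
    · congr 1
      funext idx
      rw [h j (τ - (idx : ℕ)) (by omega) (by omega)]

lemma Wset_congr {N m τ : ℕ} {d d' : Fin (m + 1) → ℕ → ℕ}
    (h : ∀ j k, 1 ≤ k → k ≤ τ → d j k = d' j k) : Wset N τ d = Wset N τ d' :=
  Set.Subset.antisymm (Wset_subset_congr h)
    (Wset_subset_congr fun j k h1 h2 => (h j k h1 h2).symm)

lemma admissible_iff_nilpotent (N : ℕ) {m : ℕ} (τ : ℕ) (d : Fin (m + 1) → ℕ → ℕ) :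
    AdmissibleWith N τ d ↔ ∃ ℓ : ℕ, 1 ≤ ℓ ∧ adjMat N τ (Vset N τ d) ^ ℓ = 0 := by
  rcases Nat.eq_zero_or_pos τ with hτ | hτ
  · subst hτ
    constructor
    · intro _
      refine ⟨1, le_refl 1, ?_⟩
      rw [pow_one]
      apply Matrix.ext
      intro i j
      rw [Matrix.zero_apply]
      by_contra hne
      obtain ⟨h1, -, -⟩ := (adjMat_ne_zero_iff N 0 (Vset N 0 d) i j).mp hne
      have hnil : wd N 0 i = [] := by simp [wd]
      rw [hnil] at h1
      exact h1.2 (nil_mem_Wset d)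
    · intro _
      refine ⟨0, le_refl 0, ?_⟩
      ext z
      simp only [Set.mem_iUnion, Finset.mem_Icc, Set.mem_setOf_eq]
      constructor
      · rintro ⟨n, ⟨hn1, hn2⟩, u, hu, w, hw, v, hv, rfl⟩
        have hu0 : u = [] := List.length_eq_zero_iff.mp (by rw [hu.1]; omega)
        have hw0 : w = [] := List.length_eq_zero_iff.mp (length_of_mem_Wset hw)
        have hv0 : v = [] := List.length_eq_zero_iff.mp (by rw [hv.1]; omega)
        subst hu0; subst hw0; subst hv0
        exact ⟨rfl, by simp⟩
      · intro hz
        have hz0 : z = [] := List.length_eq_zero_iff.mp hz.1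
        subst hz0
        exact ⟨0, ⟨le_refl 0, le_refl 0⟩, [], ⟨rfl, by simp⟩, [], nil_mem_Wset d, [],
          ⟨rfl, by simp⟩, rfl⟩
  · constructor
    · rintro ⟨ℓ₀, hℓτ, hun⟩
      set A := adjMat N τ (Vset N τ d) with hAdef
      refine ⟨ℓ₀ + 1, by omega, ?_⟩
      by_contra hA0
      have hex : ∃ i j, (A ^ (ℓ₀ + 1)) i j ≠ 0 := by
        by_contra hc
        push_neg at hc
        exact hA0 (Matrix.ext fun i j => hc i j)
      obtain ⟨i0, j0, hij⟩ := hex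
      obtain ⟨p, hp0, hpL, hpe⟩ := (pow_ne_zero_iff_walk A (ℓ₀ + 1) i0 j0).mp hij
      have hedge : ∀ k < ℓ₀ + 1,
          wd N τ (p k) ∈ Vset N τ d ∧ wd N τ (p (k + 1)) ∈ Vset N τ d ∧
          (wd N τ (p k)).drop 1 = (wd N τ (p (k + 1))).dropLast := by
        intro k hk
        exact (adjMat_ne_zero_iff N τ _ _ _).mp (hpe k hk)
      have hvert : ∀ k ≤ ℓ₀ + 1, wd N τ (p k) ∈ Vset N τ d := by
        intro k hk
        rcases Nat.lt_or_ge k (ℓ₀ + 1) with h | h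
        · exact (hedge k h).1
        · have hkl : k = ℓ₀ + 1 := by omega
          subst hkl
          exact (hedge ℓ₀ (by omega)).2.1
      set L := ℓ₀ + 1 with hL
      set g : ℕ → ℕ := fun a =>
        if h : a < τ then (p 0 ⟨a, h⟩ : ℕ) else (p (a + 1 - τ) ⟨τ - 1, by omega⟩ : ℕ)
        with hg
      set z : List ℕ := List.ofFn fun a : Fin (τ + L) => g (a : ℕ) with hzdef
      have hzlen : z.length = τ + L := by simp [hzdef]; omega
      have hgwd : ∀ k, k ≤ L → ∀ a, (ha : a < τ) → g (k + a) = (p k ⟨a, ha⟩ : ℕ) := by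
        intro k
        induction k with
        | zero =>
          intro _ a ha
          simp only [Nat.zero_add, hg]
          rw [dif_pos ha]
        | succ k ihk =>
          intro hk a ha
          rcases Nat.lt_or_ge a (τ - 1) with h1 | h1
          · have hrec := ihk (by omega) (a + 1) (by omega)
            have heq : k + 1 + a = k + (a + 1) := by omega
            rw [heq, hrec]
            have he := (hedge k (by omega)).2.2
            have hlen1 : a < ((wd N τ (p k)).drop 1).length := by
              rw [List.length_drop, wd_length]; omega
            have hgeq := List.getElem_of_eq he hlen1
            rw [List.getElem_drop, List.getElem_dropLast] at hgeq
            simp only [wd, List.getElem_ofFn] at hgeq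
            have hfin : (⟨a + 1, by omega⟩ : Fin τ) = ⟨1 + a, by omega⟩ :=
              Fin.ext (by simp only [Fin.val_mk]; omega)
            exact (congrArg (fun x : Fin τ => (p k x : ℕ)) hfin).trans hgeq
          · have ha1 : a = τ - 1 := by omega
            subst ha1
            simp only [hg]
            rw [dif_neg (by omega)]
            have hkk : k + 1 + (τ - 1) + 1 - τ = k + 1 := by omega
            rw [hkk]
      have hwin : ∀ k ≤ L, win z k τ = wd N τ (p k) := by
        intro k hk
        apply List.ext_getElem
        · rw [win_length z k τ (by omega), wd_length]
        · intro a h1 h2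
          rw [wd_length] at h2
          rw [win_getElem z k τ a h1]
          have hb : k + a < τ + L := by omega
          have hzget : z[k + a]'(by omega) = g (k + a) := by
            simp only [hzdef, List.getElem_ofFn]
          rw [hzget, hgwd k hk a h2]
          simp only [wd, List.getElem_ofFn]
      have hgN : ∀ b, g b ≤ N := by
        intro b
        simp only [hg]
        split
        · exact Nat.lt_succ_iff.mp (Fin.isLt _)
        · exact Nat.lt_succ_iff.mp (Fin.isLt _)
      have hz' : z.take ℓ₀ ∈ Words N ℓ₀ := by
        refine ⟨by rw [List.length_take, hzlen]; omega, ?_⟩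
        intro x hx
        have hxz := List.mem_of_mem_take hx
        rw [hzdef, List.mem_ofFn] at hxz
        obtain ⟨a, rfl⟩ := hxz
        exact hgN _
      rw [← hun] at hz'
      simp only [Set.mem_iUnion, Finset.mem_Icc, Set.mem_setOf_eq] at hz'
      obtain ⟨n, ⟨hn1, hn2⟩, u, hu, w, hw, v, hv, heq⟩ := hz'
      have hwlen := length_of_mem_Wset hw
      have hweq : win (z.take ℓ₀) (n - τ) τ = w := by
        rw [win, heq, List.append_assoc, ← hu.1, List.drop_left, List.take_left' hwlen]
      have h2 : win z (n - τ) τ = w := by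
        rw [← win_take z (n - τ) τ ℓ₀ (by omega)]; exact hweq
      rw [hwin (n - τ) (by omega)] at h2
      rw [← h2] at hw
      exact (hvert (n - τ) (by omega)).2 hw
    · rintro ⟨ℓ, hℓ1, hA⟩
      refine ⟨ℓ + τ, by omega, ?_⟩
      ext z
      simp only [Set.mem_iUnion, Finset.mem_Icc, Set.mem_setOf_eq]
      constructor
      · rintro ⟨n, ⟨hn1, hn2⟩, u, hu, w, hw, v, hv, rfl⟩
        refine ⟨?_, ?_⟩
        · rw [List.length_append, List.length_append, hu.1, hv.1, length_of_mem_Wset hw]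
          omega
        · intro x hx
          rcases List.mem_append.mp hx with hx | hx
          · rcases List.mem_append.mp hx with hx | hx
            · exact hu.2 x hx
            · exact (Wset_subset_words hw).2 x hx
          · exact hv.2 x hx
      · intro hzW
        have hzW' : z ∈ Words N (τ + ℓ) := by rwa [Nat.add_comm ℓ τ] at hzW
        by_cases hex : ∃ k, k ≤ ℓ ∧ win z k τ ∈ Wset N τ d
        · obtain ⟨k, hk, hkW⟩ := hex
          refine ⟨k + τ, ⟨by omega, by omega⟩, z.take k, ⟨?_, ?_⟩, win z k τ, hkW,
            z.drop (k + τ), ⟨?_, ?_⟩, ?_⟩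
          · rw [List.length_take, hzW.1]; omega
          · intro x hx; exact hzW.2 x (List.mem_of_mem_take hx)
          · rw [List.length_drop, hzW.1]
          · intro x hx; exact hzW.2 x (List.mem_of_mem_drop hx)
          · exact win_decomp z k τ
        · exfalso
          push_neg at hex
          have hexwd : ∀ k, ∃ i : Fin τ → Fin (N + 1), k ≤ ℓ → wd N τ i = win z k τ := by
            intro k
            by_cases hk : k ≤ ℓ
            · obtain ⟨i, hi⟩ := exists_wd N τ _ (win_mem_words N z k τ ℓ hzW' hk)
              exact ⟨i, fun _ => hi⟩
            · exact ⟨fun _ => 0, fun h => absurd h hk⟩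
          choose p hp using hexwd
          have hV : ∀ q, q ≤ ℓ → wd N τ (p q) ∈ Vset N τ d := by
            intro q hq
            rw [hp q hq]
            exact ⟨win_mem_words N z q τ ℓ hzW' hq, hex q hq⟩
          have hwalk := (pow_ne_zero_iff_walk (adjMat N τ (Vset N τ d)) ℓ (p 0) (p ℓ)).mpr
            ⟨p, rfl, rfl, ?_⟩
          · exact hwalk (by simp [hA])
          · intro k hk
            rw [adjMat_ne_zero_iff]
            refine ⟨hV k (by omega), hV (k + 1) (by omega), ?_⟩
            rw [hp k (by omega), hp (k + 1) (by omega)]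
            exact win_drop_one z k τ (by rw [hzW'.1]; omega)

lemma geom_bound (β : ℝ) (hβ0 : 0 < β) (hβ1 : β < 1) (K : ℕ) :
    ∑ k ∈ Finset.Icc 1 K, β ^ (-(k : ℤ)) ≤ (β ^ (-(K : ℤ)) - 1) / (1 - β) := by
  induction K with
  | zero => simp
  | succ K ih =>
    rw [Finset.sum_Icc_succ_top (by omega)]
    have h1β : (0 : ℝ) < 1 - β := by linarith
    have hβne : β ≠ 0 := ne_of_gt hβ0
    have hsucc : β ^ (-((K : ℕ) + 1 : ℕ) : ℤ) = β ^ (-(K : ℤ)) / β := by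
      push_cast
      rw [show -((K : ℤ) + 1) = -(K : ℤ) - 1 by ring, zpow_sub₀ hβne, zpow_one]
    rw [hsucc]
    have hkey : (β ^ (-(K : ℤ)) - 1) / (1 - β) + β ^ (-(K : ℤ)) / β
        = (β ^ (-(K : ℤ)) / β - 1) / (1 - β) := by
      field_simp
      ring
    linarith [ih]

lemma digits_unique (N : ℕ) (hN : 0 < N) (β : ℝ) (hβ0 : 0 < β)
    (hβ1 : β < 1 / (N + 1)) (K : ℕ) (e : ℕ → ℤ) (he : ∀ k, |e k| ≤ N) :
    (∑ k ∈ Finset.Icc 1 K, (e k : ℝ) * β ^ (-(k : ℤ)) = 0) →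
    ∀ k, 1 ≤ k → k ≤ K → e k = 0 := by
  have hN1 : (1 : ℝ) ≤ (N : ℝ) + 1 := by
    have : (0 : ℝ) ≤ (N : ℝ) := Nat.cast_nonneg N
    linarith
  have hβlt1 : β < 1 := lt_of_lt_of_le hβ1 (by
    rw [div_le_one (by linarith)]; exact hN1)
  have h1β : (0 : ℝ) < 1 - β := by linarith
  have hNβ : (N : ℝ) * β < 1 - β := by
    have h2 : β * ((N : ℝ) + 1) < 1 := (lt_div_iff₀ (by linarith)).mp hβ1
    nlinarith
  induction K with
  | zero => intro _ k h1 h2; omega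
  | succ K ih =>
    intro hsum k h1 h2
    rw [Finset.sum_Icc_succ_top (by omega)] at hsum
    have htop : e (K + 1) = 0 := by
      set S := ∑ k ∈ Finset.Icc 1 K, (e k : ℝ) * β ^ (-(k : ℤ)) with hS
      have habs : |S| ≤ (N : ℝ) * ((β ^ (-(K : ℤ)) - 1) / (1 - β)) := by
        calc |S| ≤ ∑ k ∈ Finset.Icc 1 K, |(e k : ℝ) * β ^ (-(k : ℤ))| :=
              Finset.abs_sum_le_sum_abs _ _
          _ ≤ ∑ k ∈ Finset.Icc 1 K, (N : ℝ) * β ^ (-(k : ℤ)) := by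
              apply Finset.sum_le_sum
              intro k _
              rw [abs_mul, abs_of_pos (zpow_pos hβ0 _)]
              apply mul_le_mul_of_nonneg_right _ (le_of_lt (zpow_pos hβ0 _))
              rw [show |(e k : ℝ)| = ((|e k| : ℤ) : ℝ) by push_cast; rfl]
              exact_mod_cast he k
          _ = (N : ℝ) * ∑ k ∈ Finset.Icc 1 K, β ^ (-(k : ℤ)) := by
              rw [Finset.mul_sum]
          _ ≤ (N : ℝ) * ((β ^ (-(K : ℤ)) - 1) / (1 - β)) := by
              apply mul_le_mul_of_nonneg_left (geom_bound β hβ0 hβlt1 K)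
              exact Nat.cast_nonneg N
      have hsucc : β ^ (-((K : ℕ) + 1 : ℕ) : ℤ) = β ^ (-(K : ℤ)) / β := by
        push_cast
        rw [show -((K : ℤ) + 1) = -(K : ℤ) - 1 by ring, zpow_sub₀ (ne_of_gt hβ0), zpow_one]
      have heq : |(e (K + 1) : ℝ)| * (β ^ (-(K : ℤ)) / β) = |S| := by
        rw [← abs_of_pos (show (0:ℝ) < β ^ (-(K : ℤ)) / β from
          div_pos (zpow_pos hβ0 _) hβ0), ← abs_mul, ← hsucc]
        rw [show (e (K + 1) : ℝ) * β ^ (-((K : ℕ) + 1 : ℕ) : ℤ) = -S by linarith]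
        exact abs_neg S
      set x := β ^ (-(K : ℤ)) with hx
      have hx1 : (1 : ℝ) ≤ x := one_le_zpow_of_nonpos₀ hβ0 (le_of_lt hβlt1) (by omega)
      set a := |(e (K + 1) : ℝ)| with ha
      have ha0 : (0 : ℝ) ≤ a := abs_nonneg _
      have hmain : a * (x / β) ≤ (N : ℝ) * ((x - 1) / (1 - β)) := by
        rw [heq]; exact habs
      have halt1 : a < 1 := by
        have hb1 : a * x * (1 - β) ≤ (N : ℝ) * β * (x - 1) := by
          have := mul_le_mul_of_nonneg_left hmain (le_of_lt (mul_pos hβ0 h1β))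
          calc a * x * (1 - β) = β * (1 - β) * (a * (x / β)) := by
                field_simp
            _ ≤ β * (1 - β) * ((N : ℝ) * ((x - 1) / (1 - β))) := this
            _ = (N : ℝ) * β * (x - 1) := by field_simp
        by_contra hge1
        push_neg at hge1
        have hxpos : (0 : ℝ) < x := lt_of_lt_of_le zero_lt_one hx1
        have hA' : x * (1 - β) ≤ a * x * (1 - β) := by
          calc x * (1 - β) = 1 * (x * (1 - β)) := by ring
            _ ≤ a * (x * (1 - β)) := mul_le_mul_of_nonneg_right hge1
                (mul_nonneg (le_of_lt hxpos) (le_of_lt h1β))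
            _ = a * x * (1 - β) := by ring
        have hB' : (N : ℝ) * β * (x - 1) ≤ (N : ℝ) * β * x := by
          have hNb : (0 : ℝ) ≤ (N : ℝ) * β := by positivity
          nlinarith
        have hC' : (N : ℝ) * β * x < (1 - β) * x :=
          mul_lt_mul_of_pos_right hNβ hxpos
        nlinarith
      have : |e (K + 1)| < 1 := by
        have h' : ((|e (K + 1)| : ℤ) : ℝ) < 1 := by
          rw [show ((|e (K + 1)| : ℤ) : ℝ) = a by push_cast; rfl]
          exact halt1
        exact_mod_cast h'
      rw [abs_lt] at this
      omega
    rcases Nat.lt_or_ge k (K + 1) with hlt | hge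
    · apply ih _ k h1 (by omega)
      rw [htop] at hsum
      simpa using hsum
    · have : k = K + 1 := by omega
      rw [this]
      exact htop

lemma rep_digits_eq (N : ℕ) (hN : 0 < N) (β : ℝ) (hβ0 : 0 < β) (hβ1 : β < 1 / (N + 1))
    {m : ℕ} (t : Fin (m + 1) → ℝ) (τ : ℕ) (d d' : Fin (m + 1) → ℕ → ℕ)
    (h1 : IsDigitRep N β t τ d) (h2 : IsDigitRep N β t τ d') :
    ∀ j k, 1 ≤ k → k ≤ τ → d j k = d' j k := by
  intro j k hk1 hk2
  have hN1 : (1 : ℝ) ≤ (N : ℝ) + 1 := by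
    have : (0 : ℝ) ≤ (N : ℝ) := Nat.cast_nonneg N
    linarith
  have hβlt1 : β < 1 := lt_of_lt_of_le hβ1 (by rw [div_le_one (by linarith)]; exact hN1)
  have hc : ((1 - β) / N : ℝ) ≠ 0 := by
    apply ne_of_gt
    apply div_pos (by linarith)
    exact_mod_cast hN
  have hSS : ∑ k ∈ Finset.Icc 1 τ, (d j k : ℝ) * β ^ (-(k : ℤ))
      = ∑ k ∈ Finset.Icc 1 τ, (d' j k : ℝ) * β ^ (-(k : ℤ)) :=
    mul_left_cancel₀ hc ((h1.2 j).symm.trans (h2.2 j))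
  have hzero : ∑ k ∈ Finset.Icc 1 τ,
      (((d j k : ℤ) - (d' j k : ℤ) : ℤ) : ℝ) * β ^ (-(k : ℤ)) = 0 := by
    have : ∑ k ∈ Finset.Icc 1 τ,
        (((d j k : ℤ) - (d' j k : ℤ) : ℤ) : ℝ) * β ^ (-(k : ℤ))
        = ∑ k ∈ Finset.Icc 1 τ, ((d j k : ℝ) * β ^ (-(k : ℤ))
            - (d' j k : ℝ) * β ^ (-(k : ℤ))) := by
      apply Finset.sum_congr rfl
      intro k _
      push_cast
      ring
    rw [this, Finset.sum_sub_distrib, hSS, sub_self]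
  have := digits_unique N hN β hβ0 hβ1 τ (fun k => (d j k : ℤ) - (d' j k : ℤ))
    (fun k => by
      have hb1 := h1.1 j k
      have hb2 := h2.1 j k
      rw [abs_le]
      constructor <;> [skip; skip] <;> push_cast <;> omega) hzero k hk1 hk2
  have h0 : (d j k : ℤ) - (d' j k : ℤ) = 0 := this
  omega

/-- Let `t = (t_0,…,t_m) ∈ T^{m+1}` with `0 = t_0 < ⋯ < t_m` (with minimal digit
representation `d` of length `τ = τ_t`). Then `t` is an admissible translation vector
iff the adjacency matrix `A_t` of `G_t` is nilpotent, i.e. `A_t ^ ℓ = 0` for some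
`ℓ ∈ ℤ_+`. -/
theorem stmt2 (N : ℕ) (hN : 0 < N) (β : ℝ) (hβ0 : 0 < β) (hβ1 : β < 1 / (N + 1))
    (m : ℕ) (t : Fin (m + 1) → ℝ) (ht0 : t 0 = 0) (hmono : StrictMono t)
    (hT : ∀ j, t j ∈ Tset N β) (τ : ℕ) (d : Fin (m + 1) → ℕ → ℕ)
    (hd : IsMinimalRep N β t τ d) :
    IsAdmissible N β t ↔ ∃ ℓ : ℕ, 1 ≤ ℓ ∧ adjMat N τ (Vset N τ d) ^ ℓ = 0 := by
  constructor
  · rintro ⟨hT', τ', d', ⟨hrep', hmin'⟩, hadm'⟩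
    have hττ' : τ' = τ := by
      by_contra hne
      rcases Nat.lt_or_ge τ' τ with h | h
      · exact hd.2 τ' h d' hrep'
      · exact hmin' τ (by omega) d hd.1
    subst hττ'
    have hdd : ∀ j k, 1 ≤ k → k ≤ τ' → d' j k = d j k :=
      rep_digits_eq N hN β hβ0 hβ1 t τ' d' d hrep' hd.1
    rw [admissible_iff_nilpotent] at hadm'
    have hW : Wset N τ' d' = Wset N τ' d := Wset_congr hdd
    have hV : Vset N τ' d' = Vset N τ' d := by rw [Vset, Vset, hW]
    rw [hV] at hadm'
    exact hadm'
  · intro h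
    exact ⟨hT, τ, d, hd, (admissible_iff_nilpotent N τ d).mpr h⟩

end HSCantor
end
end

section
/- Suppose 0 < β < 1/(N+1), and let t = (t_0, t_1, …, t_m) ∈ ℝ^{m+1} with 0 = t_0 < t_1 < … < t_m. If Γ_t is a self-similar set, then either Γ_t or Γ_{t̂} has a generating IFS that contains a similitude g(x) = r x with 0 < r < 1. -/
noncomputable section

namespace HSCantor

lemma summable_digits (β : ℝ) (hβ0 : 0 ≤ β) (hβ1 : β < 1) (N : ℕ) (c : ℕ → ℤ)
    (hc : ∀ k, c k ∈ Set.Icc 0 (N : ℤ)) : Summable fun k => (c k : ℝ) * β ^ k := by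
  have hb : ∀ k, 0 ≤ (c k : ℝ) ∧ (c k : ℝ) ≤ N := by
    intro k
    obtain ⟨h1, h2⟩ := Set.mem_Icc.mp (hc k)
    exact ⟨by exact_mod_cast h1, by exact_mod_cast h2⟩
  apply Summable.of_nonneg_of_le (f := fun k => (N : ℝ) * β ^ k)
  · intro k; exact mul_nonneg (hb k).1 (pow_nonneg hβ0 k)
  · intro k; exact mul_le_mul_of_nonneg_right (hb k).2 (pow_nonneg hβ0 k)
  · exact (summable_geometric_of_lt_one hβ0 hβ1).mul_left _

lemma zero_mem_Gamma (N : ℕ) (β : ℝ) : (0 : ℝ) ∈ Gamma N β := by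
  refine ⟨fun _ => 0, fun k => ⟨le_refl 0, by positivity⟩, ?_⟩
  simp

lemma Gamma_nonneg (N : ℕ) (β : ℝ) (hβ0 : 0 ≤ β) (hβ1 : β < 1) :
    ∀ x ∈ Gamma N β, 0 ≤ x := by
  rintro x ⟨c, hc, rfl⟩
  refine mul_nonneg (div_nonneg (by linarith) (Nat.cast_nonneg N)) ?_
  refine tsum_nonneg fun k => mul_nonneg ?_ (pow_nonneg hβ0 k)
  have h1 := (Set.mem_Icc.mp (hc k)).1
  exact_mod_cast h1

lemma Gamma_symm (N : ℕ) (hN : 0 < N) (β : ℝ) (hβ0 : 0 ≤ β) (hβ1 : β < 1) :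
    ∀ x ∈ Gamma N β, 1 - x ∈ Gamma N β := by
  rintro x ⟨c, hc, rfl⟩
  refine ⟨fun k => N - c k, fun k => ?_, ?_⟩
  · obtain ⟨h1, h2⟩ := Set.mem_Icc.mp (hc k)
    show (N : ℤ) - c k ∈ Set.Icc 0 (N : ℤ)
    exact Set.mem_Icc.mpr ⟨by omega, by omega⟩
  have hs := summable_digits β hβ0 hβ1 N c hc
  have hg : Summable fun k : ℕ => (N : ℝ) * β ^ k :=
    (summable_geometric_of_lt_one hβ0 hβ1).mul_left _
  have htt : ∑' k : ℕ, (((N : ℤ) - c k : ℤ) : ℝ) * β ^ k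
      = (N : ℝ) * (1 - β)⁻¹ - ∑' k : ℕ, (c k : ℝ) * β ^ k := by
    have hfun : (fun k : ℕ => (((N : ℤ) - c k : ℤ) : ℝ) * β ^ k)
        = fun k : ℕ => (N : ℝ) * β ^ k - (c k : ℝ) * β ^ k := by
      funext k; push_cast; ring
    rw [hfun, Summable.tsum_sub hg hs, tsum_mul_left, tsum_geometric_of_lt_one hβ0 hβ1]
  rw [htt]
  have hβ1' : (1 : ℝ) - β ≠ 0 := by linarith
  have hN' : (N : ℝ) ≠ 0 := Nat.cast_ne_zero.mpr hN.ne'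
  field_simp

lemma Gamma_symm_eq (N : ℕ) (hN : 0 < N) (β : ℝ) (hβ0 : 0 ≤ β) (hβ1 : β < 1) :
    (fun x => 1 - x) '' Gamma N β = Gamma N β := by
  apply Set.Subset.antisymm
  · rintro y ⟨x, hx, rfl⟩; exact Gamma_symm N hN β hβ0 hβ1 x hx
  · intro x hx; exact ⟨1 - x, Gamma_symm N hN β hβ0 hβ1 x hx, by ring⟩

lemma GammaT_nonneg (N : ℕ) (β : ℝ) (hβ0 : 0 ≤ β) (hβ1 : β < 1) {m : ℕ}
    (t : Fin (m + 1) → ℝ) (ht : ∀ j, 0 ≤ t j) : ∀ x ∈ GammaT N β t, 0 ≤ x := by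
  intro x hx
  simp only [GammaT, Set.mem_iUnion, Set.mem_image] at hx
  obtain ⟨j, y, hy, rfl⟩ := hx
  have := Gamma_nonneg N β hβ0 hβ1 y hy
  linarith [ht j]

lemma zero_mem_GammaT (N : ℕ) (β : ℝ) {m : ℕ} (t : Fin (m + 1) → ℝ) (ht0 : t 0 = 0) :
    (0 : ℝ) ∈ GammaT N β t := by
  simp only [GammaT, Set.mem_iUnion, Set.mem_image]
  exact ⟨0, 0, zero_mem_Gamma N β, by rw [ht0]; ring⟩

lemma GammaT_conj (N : ℕ) (hN : 0 < N) (β : ℝ) (hβ0 : 0 ≤ β) (hβ1 : β < 1)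
    {m : ℕ} (t : Fin (m + 1) → ℝ) :
    GammaT N β (conj t)
      = (fun x => (1 + t (Fin.last m)) - x) '' GammaT N β t := by
  unfold GammaT
  rw [Set.image_iUnion]
  rw [← (Fin.revPerm (n := m + 1)).surjective.iUnion_comp
      (g := fun j => (fun x => x + conj t j) '' Gamma N β)]
  apply Set.iUnion_congr
  intro j
  have h1 : conj t (Fin.revPerm j) = t (Fin.last m) - t j := by
    simp only [conj]
    congr 2
    ext
    simp [Fin.revPerm, Fin.rev, Nat.succ_sub_succ,
      Nat.sub_sub_self (Nat.le_of_lt_succ j.isLt)]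
  rw [h1, ← Set.image_comp]
  have hfe : ((fun x => 1 + t (Fin.last m) - x) ∘ fun x => x + t j)
      = (fun x => x + (t (Fin.last m) - t j)) ∘ (fun x => 1 - x) := by
    funext w
    simp only [Function.comp]
    ring
  rw [hfe, Set.image_comp, Gamma_symm_eq N hN β hβ0 hβ1]

/-- Suppose `0 < β < 1/(N+1)` and `t = (t_0,…,t_m)` with `0 = t_0 < ⋯ < t_m`.
If `Γ_t` is a self-similar set, then either `Γ_t` or `Γ_{t̂}` has a generating IFS
containing a similitude `g(x) = r x` with `0 < r < 1`. -/
theorem stmt5 (N : ℕ) (hN : 0 < N) (β : ℝ) (hβ0 : 0 < β) (hβ1 : β < 1 / (N + 1))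
    (m : ℕ) (t : Fin (m + 1) → ℝ) (ht0 : t 0 = 0) (hmono : StrictMono t)
    (hss : IsSelfSimilar (GammaT N β t)) :
    (∃ F : Finset (ℝ × ℝ), (∀ p ∈ F, 0 < |p.1| ∧ |p.1| < 1) ∧
        GammaT N β t = ⋃ p ∈ F, (fun x => p.1 * x + p.2) '' GammaT N β t ∧
        ∃ r : ℝ, 0 < r ∧ r < 1 ∧ (r, (0 : ℝ)) ∈ F) ∨
    (∃ F : Finset (ℝ × ℝ), (∀ p ∈ F, 0 < |p.1| ∧ |p.1| < 1) ∧
        GammaT N β (conj t) = ⋃ p ∈ F, (fun x => p.1 * x + p.2) '' GammaT N β (conj t) ∧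
        ∃ r : ℝ, 0 < r ∧ r < 1 ∧ (r, (0 : ℝ)) ∈ F) := by
  have hβ1' : β < 1 := by
    have hc : (0:ℝ) ≤ (N:ℝ) := Nat.cast_nonneg N
    have h1 : (1:ℝ) / (N + 1) ≤ 1 := by
      rw [div_le_one (by positivity)]; linarith
    linarith
  have hβ0' : 0 ≤ β := hβ0.le
  set E := GammaT N β t with hE
  obtain ⟨hne, hcomp, F, hF, hFE⟩ := hss
  have htnn : ∀ j, 0 ≤ t j := by
    intro j
    have := hmono.monotone (Fin.zero_le j)
    rw [ht0] at this; exact this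
  have hEnn : ∀ x ∈ E, 0 ≤ x := GammaT_nonneg N β hβ0' hβ1' t htnn
  have h0E : (0 : ℝ) ∈ E := zero_mem_GammaT N β t ht0
  obtain ⟨M, hME, hMub⟩ := hcomp.exists_isGreatest hne
  have himg : ∀ p ∈ F, ∀ x ∈ E, p.1 * x + p.2 ∈ E := by
    intro p hp x hx
    rw [hFE]
    simp only [Set.mem_iUnion, Set.mem_image]
    exact ⟨p, hp, x, hx, rfl⟩
  obtain ⟨p, hpF, x₀, hx₀E, hpx₀⟩ : ∃ p ∈ F, ∃ x ∈ E, p.1 * x + p.2 = 0 := by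
    have h := h0E; rw [hFE] at h
    simpa only [Set.mem_iUnion, Set.mem_image, exists_prop] using h
  obtain ⟨q, hqF, y₀, hy₀E, hqy₀⟩ : ∃ q ∈ F, ∃ y ∈ E, q.1 * y + q.2 = M := by
    have h := hME; rw [hFE] at h
    simpa only [Set.mem_iUnion, Set.mem_image, exists_prop] using h
  have hp1 := hF p hpF
  have hq1 := hF q hqF
  by_cases hp1pos : 0 < p.1
  · left
    have hp2E : p.2 ∈ E := by
      have h := himg p hpF 0 h0E; simpa using h
    have hp2nn : 0 ≤ p.2 := hEnn _ hp2E
    have hx₀nn : 0 ≤ x₀ := hEnn _ hx₀E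
    have hp2 : p.2 = 0 := by nlinarith
    refine ⟨F, hF, hFE, p.1, hp1pos, ?_, ?_⟩
    · have h := hp1.2; rwa [abs_of_pos hp1pos] at h
    · have hpe : p = (p.1, (0:ℝ)) := by
        rw [Prod.mk.injEq]; exact ⟨rfl, hp2⟩
      rwa [hpe] at hpF
  · have hp1neg : p.1 < 0 := (not_lt.mp hp1pos).lt_of_ne (abs_pos.mp hp1.1)
    have hx₀le : x₀ ≤ M := hMub hx₀E
    have hpM : p.1 * M + p.2 = 0 := by
      have h1 : p.1 * M + p.2 ≤ 0 := by nlinarith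
      have h2 : 0 ≤ p.1 * M + p.2 := hEnn _ (himg p hpF M hME)
      linarith
    by_cases hq1neg : q.1 < 0
    · left
      have hq2E : q.2 ∈ E := by
        have h := himg q hqF 0 h0E; simpa using h
      have hq2 : q.2 = M := by
        have h1 : M ≤ q.2 := by nlinarith [hEnn _ hy₀E]
        have h2 : q.2 ≤ M := hMub hq2E
        linarith
      set r := p.1 * q.1 with hr
      have hr0 : 0 < r := mul_pos_of_neg_of_neg hp1neg hq1neg
      have hr1 : r < 1 := by
        have h1 : |p.1 * q.1| < 1 := by
          rw [abs_mul]
          nlinarith [abs_nonneg p.1, abs_nonneg q.1, hp1.2, hq1.2]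
        rwa [abs_of_pos hr0] at h1
      classical
      refine ⟨insert (r, (0:ℝ)) F, ?_, ?_, r, hr0, hr1, Finset.mem_insert_self _ _⟩
      · intro p' hp'
        rcases Finset.mem_insert.mp hp' with h | h
        · rw [h]; constructor <;> simp [abs_of_pos hr0] <;> [exact hr0; exact hr1]
        · exact hF p' h
      · rw [Finset.set_biUnion_insert, ← hFE]
        refine (Set.union_eq_self_of_subset_left ?_).symm
        rintro z ⟨w, hw, rfl⟩
        have h3 := himg q hqF w hw
        have h4 := himg p hpF _ h3
        have he : p.1 * (q.1 * w + q.2) + p.2 = r * w + 0 := by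
          rw [hq2, hr]; linear_combination hpM
        rwa [he] at h4
    · right
      have hq1pos : 0 < q.1 := by
        rcases lt_or_gt_of_ne (abs_pos.mp hq1.1) with h | h
        · exact absurd h hq1neg
        · exact h
      have hy₀le : y₀ ≤ M := hMub hy₀E
      have hy₀ : y₀ = M := by
        have h2 : q.1 * M + q.2 ≤ M := hMub (himg q hqF M hME)
        nlinarith
      have hq2 : q.2 = M - q.1 * M := by rw [hy₀] at hqy₀; linarith
      set M' := 1 + t (Fin.last m) with hM'
      have hconjnn : ∀ j, 0 ≤ conj t j := by
        intro j
        simp only [conj, sub_nonneg]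
        exact hmono.monotone (Fin.le_last _)
      have hconj0 : conj t 0 = 0 := by
        show t (Fin.last m) - t _ = 0
        rw [sub_eq_zero]
        congr 1
      have hconjEq : GammaT N β (conj t) = (fun x => M' - x) '' E :=
        GammaT_conj N hN β hβ0' hβ1' t
      have hMM' : M = M' := by
        have h1 : M' ∈ E := by
          have h0 := zero_mem_GammaT N β (conj t) hconj0
          rw [hconjEq] at h0
          obtain ⟨y, hy, hy0⟩ := h0
          have hyM : y = M' := by dsimp at hy0; linarith
          rwa [← hyM]
        have h2 : 0 ≤ M' - M := by
          have := GammaT_nonneg N β hβ0' hβ1' (conj t) hconjnn (M' - M)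
            (hconjEq ▸ ⟨M, hME, rfl⟩)
          linarith
        have h3 := hMub h1
        linarith
      classical
      set g : ℝ × ℝ → ℝ × ℝ := fun a => (a.1, (1 - a.1) * M' - a.2) with hg
      refine ⟨F.image g, ?_, ?_, q.1, hq1pos, ?_, ?_⟩
      · intro p' hp'
        obtain ⟨a, ha, rfl⟩ := Finset.mem_image.mp hp'
        exact hF a ha
      · rw [hconjEq, Finset.set_biUnion_finset_image]
        have key : ∀ a : ℝ × ℝ,
            (fun y => (g a).1 * y + (g a).2) '' ((fun w => M' - w) '' E)
              = (fun w => M' - w) '' ((fun y => a.1 * y + a.2) '' E) := by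
          intro a
          rw [← Set.image_comp, ← Set.image_comp]
          apply Set.image_congr'
          intro w
          simp only [Function.comp, hg]
          ring
        have hcong : (⋃ a ∈ F, (fun y => (g a).1 * y + (g a).2) '' ((fun w => M' - w) '' E))
            = ⋃ a ∈ F, (fun w => M' - w) '' ((fun y => a.1 * y + a.2) '' E) :=
          Set.iUnion₂_congr fun a _ => key a
        rw [hcong, ← Set.image_iUnion₂, ← hFE]
      · have h := hq1.2; rwa [abs_of_pos hq1pos] at h
      · refine Finset.mem_image.mpr ⟨q, hqF, ?_⟩
        simp only [hg]
        rw [Prod.mk.injEq]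
        exact ⟨rfl, by rw [hq2, hMM']; ring⟩

end HSCantor
end
end

section
/- Suppose 0 < β < 1/(2N+1). If x, y ∈ ℝ satisfy y ∈ Γ and x + y, 2x + y, …, Nx + y ∈ Γ, then x ∈ Γ_{β,{−1,0,1}}. -/
noncomputable section

namespace HSCantor

lemma summable_aux (β : ℝ) (hβ0 : 0 ≤ β) (hβ1 : β < 1) (c : ℕ → ℤ) (M : ℝ)
    (hc : ∀ k, |(c k : ℝ)| ≤ M) : Summable (fun k => (c k : ℝ) * β ^ k) := by
  apply Summable.of_norm_bounded (g := fun k => M * β ^ k)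
    ((summable_geometric_of_lt_one hβ0 hβ1).mul_left M)
  intro k
  rw [Real.norm_eq_abs, abs_mul, abs_pow, abs_of_nonneg hβ0]
  exact mul_le_mul_of_nonneg_right (hc k) (pow_nonneg hβ0 k)

lemma digits_zero (N : ℕ) (β : ℝ) (hβ0 : 0 < β) (hβ1 : β * (2 * N + 1) < 1)
    (e : ℕ → ℤ) (he : ∀ k, |e k| ≤ 2 * N)
    (h : ∑' k, (e k : ℝ) * β ^ k = 0) : ∀ k, e k = 0 := by
  have hNn : (0:ℝ) ≤ (N:ℝ) := Nat.cast_nonneg N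
  have hβlt1 : β < 1 := by nlinarith
  have hM : ∀ k, |(e k : ℝ)| ≤ 2 * N := by
    intro k
    have := he k
    calc |(e k : ℝ)| = ((|e k| : ℤ) : ℝ) := by push_cast; ring
      _ ≤ ((2 * N : ℤ) : ℝ) := by exact_mod_cast this
      _ = 2 * N := by push_cast; ring
  have hsum : Summable (fun k => (e k : ℝ) * β ^ k) :=
    summable_aux β hβ0.le hβlt1 e _ hM
  intro k
  induction k using Nat.strong_induction_on with
  | _ k ih =>
    by_contra hk
    have h1 : (1:ℝ) ≤ |(e k : ℝ)| := by
      have := Int.one_le_abs hk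
      calc (1:ℝ) = ((1:ℤ):ℝ) := by norm_num
        _ ≤ ((|e k| : ℤ) : ℝ) := by exact_mod_cast this
        _ = |(e k : ℝ)| := by push_cast; ring
    have hsplit := Summable.sum_add_tsum_nat_add (f := fun k => (e k : ℝ) * β ^ k) k hsum
    have hfin : (∑ i ∈ Finset.range k, (e i : ℝ) * β ^ i) = 0 := by
      apply Finset.sum_eq_zero
      intro i hi
      rw [ih i (Finset.mem_range.mp hi)]
      simp
    have htail : (∑' i, ((e (i + k) : ℝ) * β ^ (i + k))) = 0 := by
      rw [h, hfin] at hsplit; linarith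
    have hg : Summable (fun i => (e (i + k) : ℝ) * β ^ (i + k)) :=
      (summable_nat_add_iff k).mpr hsum
    have hsplit2 := Summable.sum_add_tsum_nat_add
      (f := fun i => (e (i + k) : ℝ) * β ^ (i + k)) 1 hg
    rw [htail] at hsplit2
    have hzero : (e k : ℝ) * β ^ k
        = - ∑' i, ((e (i + 1 + k) : ℝ) * β ^ (i + 1 + k)) := by
      simp only [Finset.sum_range_one, Nat.zero_add] at hsplit2
      linarith
    have hbnd : ‖∑' i, ((e (i + 1 + k) : ℝ) * β ^ (i + 1 + k))‖
        ≤ 2 * N * β ^ (k + 1) / (1 - β) := by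
      have hgeo : HasSum (fun i : ℕ => (2 * N * β ^ (k + 1)) * β ^ i)
          ((2 * N * β ^ (k + 1)) * (1 - β)⁻¹) :=
        (hasSum_geometric_of_lt_one hβ0.le hβlt1).mul_left _
      have := tsum_of_norm_bounded hgeo (f := fun i => (e (i + 1 + k) : ℝ) * β ^ (i + 1 + k)) ?_
      · calc ‖∑' i, ((e (i + 1 + k) : ℝ) * β ^ (i + 1 + k))‖
            ≤ (2 * N * β ^ (k + 1)) * (1 - β)⁻¹ := this
          _ = 2 * N * β ^ (k + 1) / (1 - β) := by ring
      · intro i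
        rw [Real.norm_eq_abs, abs_mul, abs_pow, abs_of_nonneg hβ0.le]
        have : β ^ (i + 1 + k) = β ^ (k + 1) * β ^ i := by ring
        rw [this, ← mul_assoc]
        exact mul_le_mul_of_nonneg_right
          (mul_le_mul_of_nonneg_right (hM _) (pow_pos hβ0 _).le)
          (pow_pos hβ0 _).le
    have hpow : (0:ℝ) < β ^ k := pow_pos hβ0 k
    have hβk1 : β ^ (k + 1) = β * β ^ k := by ring
    have habs : |(e k : ℝ)| * β ^ k ≤ 2 * N * β ^ (k + 1) / (1 - β) := by
      calc |(e k : ℝ)| * β ^ k = |(e k : ℝ) * β ^ k| := by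
            rw [abs_mul, abs_pow, abs_of_nonneg hβ0.le]
        _ = ‖∑' i, ((e (i + 1 + k) : ℝ) * β ^ (i + 1 + k))‖ := by
            rw [hzero, Real.norm_eq_abs, abs_neg]
        _ ≤ _ := hbnd
    have h1b : (0:ℝ) < 1 - β := by linarith
    rw [hβk1] at habs
    have habs2 : |(e k : ℝ)| * β ^ k * (1 - β) ≤ 2 * N * (β * β ^ k) :=
      (le_div_iff₀ h1b).mp habs
    have e1 : β ^ k ≤ |(e k : ℝ)| * β ^ k := le_mul_of_one_le_left hpow.le h1
    have e2 : β ^ k * (1 - β) ≤ 2 * N * (β * β ^ k) :=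
      le_trans (mul_le_mul_of_nonneg_right e1 h1b.le) habs2
    have e0 : 2 * (N:ℝ) * β < 1 - β := by
      have hr : β * (2 * N + 1) = 2 * N * β + β := by ring
      linarith
    have e3 : 2 * (N:ℝ) * β * β ^ k < (1 - β) * β ^ k :=
      mul_lt_mul_of_pos_right e0 hpow
    linarith [e2, e3]

/-- Suppose `0 < β < 1/(2N+1)`. If `y ∈ Γ` and `x + y, 2x + y, …, Nx + y ∈ Γ`,
then `x ∈ Γ_{β,{-1,0,1}}`. -/
theorem stmt7 (N : ℕ) (hN : 0 < N) (β : ℝ) (hβ0 : 0 < β) (hβ1 : β < 1 / (2 * N + 1))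
    (x y : ℝ) (hy : y ∈ Gamma N β)
    (h : ∀ i : ℕ, 1 ≤ i → i ≤ N → (i : ℝ) * x + y ∈ Gamma N β) :
    x ∈ cantorD N β (Set.Icc (-1) 1) := by
  have hNR : (0:ℝ) < (N:ℝ) := by exact_mod_cast hN
  have h2N1 : (0:ℝ) < 2 * N + 1 := by positivity
  have hβN : β * (2 * N + 1) < 1 := by
    rw [lt_div_iff₀ h2N1] at hβ1; exact hβ1
  have hβlt1 : β < 1 := by nlinarith
  have hfac : ((1 - β) / N : ℝ) ≠ 0 := by
    apply div_ne_zero <;> [linarith; exact hNR.ne']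
  -- codings of i*x + y for 0 ≤ i ≤ N
  have hcod : ∀ i : ℕ, i ≤ N → ∃ c : ℕ → ℤ,
      (∀ k, (0:ℤ) ≤ c k ∧ c k ≤ N) ∧
      (i:ℝ) * x + y = (1 - β) / N * ∑' k, (c k : ℝ) * β ^ k := by
    intro i hi
    rcases Nat.eq_zero_or_pos i with rfl | hi1
    · obtain ⟨c, hc1, hc2⟩ := hy
      exact ⟨c, fun k => hc1 k, by simpa using hc2⟩
    · obtain ⟨c, hc1, hc2⟩ := h i hi1 hi
      exact ⟨c, fun k => hc1 k, hc2⟩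
  choose! b hb1 hb2 using hcod
  have hbabs : ∀ i, i ≤ N → ∀ k, |(b i k : ℝ)| ≤ N := by
    intro i hi k
    obtain ⟨h1, h2⟩ := hb1 i hi k
    rw [abs_le]
    constructor
    · have h1' : (0:ℝ) ≤ ((b i k : ℤ):ℝ) := by exact_mod_cast h1
      linarith
    · exact_mod_cast h2
  have hbsum : ∀ i, i ≤ N → Summable (fun k => (b i k : ℝ) * β ^ k) :=
    fun i hi => summable_aux β hβ0.le hβlt1 _ _ (hbabs i hi)
  -- each difference sequence is a coding of x
  have hdiff : ∀ i : ℕ, 1 ≤ i → i ≤ N →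
      x = (1 - β) / N * ∑' k, ((b i k - b (i-1) k : ℤ) : ℝ) * β ^ k := by
    intro i hi1 hiN
    have hi1' : i - 1 ≤ N := le_trans (Nat.sub_le i 1) hiN
    have e1 := hb2 i hiN
    have e2 := hb2 (i-1) hi1'
    have hcast : ((i-1 : ℕ) : ℝ) = (i:ℝ) - 1 := by
      have : (1:ℕ) ≤ i := hi1
      push_cast [Nat.cast_sub this]; ring
    have hsub : ∑' k, ((b i k - b (i-1) k : ℤ) : ℝ) * β ^ k
        = (∑' k, (b i k : ℝ) * β ^ k) - ∑' k, (b (i-1) k : ℝ) * β ^ k := by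
      rw [← Summable.tsum_sub (hbsum i hiN) (hbsum (i-1) hi1')]
      congr 1; funext k; push_cast; ring
    rw [hsub, mul_sub, ← e1, ← e2, hcast]; ring
  set d : ℕ → ℤ := fun k => b 1 k - b 0 k with hd
  -- uniqueness: all difference sequences coincide with d
  have huniq : ∀ i : ℕ, 1 ≤ i → i ≤ N → ∀ k, b i k - b (i-1) k = d k := by
    intro i hi1 hiN
    have hi1' : i - 1 ≤ N := le_trans (Nat.sub_le i 1) hiN
    have hN1 : 1 ≤ N := hN
    have e1 := hdiff i hi1 hiN
    have e2 := hdiff 1 le_rfl hN1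
    have heq : ∑' k, ((b i k - b (i-1) k : ℤ) : ℝ) * β ^ k
        = ∑' k, ((b 1 k - b 0 k : ℤ) : ℝ) * β ^ k := by
      have := e1.symm.trans e2
      exact mul_left_cancel₀ hfac this
    have habs : ∀ j k, j ≤ N → |b i k - b (i-1) k - (b j k - b 0 k)| ≤ 2 * N → True :=
      fun _ _ _ _ => trivial
    have hsumA : Summable (fun k => ((b i k - b (i-1) k : ℤ) : ℝ) * β ^ k) := by
      apply summable_aux β hβ0.le hβlt1 _ (2 * N)
      intro k
      push_cast
      calc |(b i k : ℝ) - (b (i-1) k : ℝ)| ≤ |(b i k : ℝ)| + |(b (i-1) k : ℝ)| :=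
            abs_sub _ _
        _ ≤ N + N := add_le_add (hbabs i hiN k) (hbabs (i-1) hi1' k)
        _ = 2 * N := by ring
    have hsumB : Summable (fun k => ((b 1 k - b 0 k : ℤ) : ℝ) * β ^ k) := by
      apply summable_aux β hβ0.le hβlt1 _ (2 * N)
      intro k
      push_cast
      calc |(b 1 k : ℝ) - (b 0 k : ℝ)| ≤ |(b 1 k : ℝ)| + |(b 0 k : ℝ)| := abs_sub _ _
        _ ≤ N + N := add_le_add (hbabs 1 hN1 k) (hbabs 0 (Nat.zero_le N) k)
        _ = 2 * N := by ring
    have hzero : ∑' k, (((b i k - b (i-1) k) - (b 1 k - b 0 k) : ℤ) : ℝ) * β ^ k = 0 := by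
      have : ∀ k, (((b i k - b (i-1) k) - (b 1 k - b 0 k) : ℤ) : ℝ) * β ^ k
          = ((b i k - b (i-1) k : ℤ) : ℝ) * β ^ k - ((b 1 k - b 0 k : ℤ) : ℝ) * β ^ k := by
        intro k; push_cast; ring
      rw [tsum_congr this, Summable.tsum_sub hsumA hsumB, heq, sub_self]
    have hebnd : ∀ k, |(b i k - b (i-1) k) - (b 1 k - b 0 k)| ≤ 2 * N := by
      intro k
      have a1 := hb1 i hiN k
      have a2 := hb1 (i-1) hi1' k
      have a3 := hb1 1 hN1 k
      have a4 := hb1 0 (Nat.zero_le N) k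
      rw [abs_le]
      omega
    intro k
    have hz := digits_zero N β hβ0 hβN _ hebnd hzero k
    simp only [hd]
    omega
  -- telescoping: b i k = b 0 k + i * d k
  have htel : ∀ i : ℕ, i ≤ N → ∀ k, b i k = b 0 k + i * d k := by
    intro i
    induction i with
    | zero => intro _ k; simp
    | succ n ihn =>
      intro hn k
      have hn' : n ≤ N := le_of_lt (Nat.lt_of_succ_le hn)
      have h1 := huniq (n+1) (Nat.succ_le_succ (Nat.zero_le n)) hn k
      simp only [Nat.add_sub_cancel] at h1
      have h2 := ihn hn' k
      push_cast
      push_cast at h2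
      linarith [h1, h2]
  -- digit bounds: -1 ≤ d k ≤ 1
  have hdmem : ∀ k, d k ∈ Set.Icc (-1 : ℤ) 1 := by
    intro k
    have hNk := htel N le_rfl k
    have a1 := hb1 N le_rfl k
    have a2 := hb1 0 (Nat.zero_le N) k
    have hNZ : (1:ℤ) ≤ (N:ℤ) := by exact_mod_cast hN
    constructor
    · nlinarith [hNk, a1.1, a2.2, hNZ]
    · nlinarith [hNk, a1.2, a2.1, hNZ]
  exact ⟨d, hdmem, hdiff 1 le_rfl hN⟩

end HSCantor
end
end
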